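/- Let $N \ge 2$, $0 \le \beta < N$, $\gamma \le \beta$, $\gamma < N$, $\alpha_{N,\beta} = \frac{N-\beta}{N} N\omega_{N-1}^{1/(N-1)}$, and let $u_n$ be the Moser sequence with $A_n = \omega_{N-1}^{-1/N}(n/(N-\beta))^{-1/N}$ and $b_n = n/(N-\beta)$. Then for any $\alpha > 0$, $\int_{\mathbb{R}^N} \Phi_N(\alpha |u_n|^{N/(N-1)}) |x|^{-\beta} dx \ge \frac{\omega_{N-1}}{N-\beta} \Phi_N\!\left( \frac{\alpha}{\alpha_{N,\beta}} n \right) e^{-n}$. -/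

import Mathlib

open MeasureTheory ENNReal

noncomputable def Phi (N : ℕ) (t : ℝ) : ℝ :=
  Real.exp t - ∑ j ∈ Finset.range (N - 1), t ^ j / (Nat.factorial j)

/-- `‖∇u‖_{L^N}^N` (with the pointwise Fréchet gradient). -/
noncomputable def gradNormPow (N : ℕ) (u : EuclideanSpace ℝ (Fin N) → ℝ) : ℝ≥0∞ :=
  ∫⁻ x, ENNReal.ofReal (‖gradient u x‖ ^ N)

/-- `‖u‖_{N,γ}^N = ∫ |u|^N |x|^{-γ} dx`. -/
noncomputable def wNormPow (N : ℕ) (γ : ℝ) (u : EuclideanSpace ℝ (Fin N) → ℝ) : ℝ≥0∞ :=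
  ∫⁻ x, ENNReal.ofReal (|u x| ^ N * ‖x‖ ^ (-γ))

/-- `∫ Φ_N(α |u|^{N/(N-1)}) |x|^{-β} dx`. -/
noncomputable def PhiInt (N : ℕ) (β α : ℝ) (u : EuclideanSpace ℝ (Fin N) → ℝ) : ℝ≥0∞ :=
  ∫⁻ x, ENNReal.ofReal (Phi N (α * |u x| ^ ((N : ℝ) / ((N : ℝ) - 1))) * ‖x‖ ^ (-β))

noncomputable def sphereArea (N : ℕ) : ℝ :=
  N * (volume (Metric.ball (0 : EuclideanSpace ℝ (Fin N)) 1)).toReal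

/-- `α_N = N ω_{N-1}^{1/(N-1)}`. -/
noncomputable def alphaN (N : ℕ) : ℝ := N * (sphereArea N) ^ ((1 : ℝ) / ((N : ℝ) - 1))

/-- `α_{N,β} = ((N-β)/N) α_N`. -/
noncomputable def alphaNB (N : ℕ) (β : ℝ) : ℝ := (((N : ℝ) - β) / N) * alphaN N

/-- The weighted Adachi-Tanaka supremum `Ã(N, α, β, γ)`. -/
noncomputable def AT (N : ℕ) (α β γ : ℝ) : ℝ≥0∞ :=
  sSup { I : ℝ≥0∞ | ∃ u : EuclideanSpace ℝ (Fin N) → ℝ,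
    gradNormPow N u ≠ ⊤ ∧ wNormPow N γ u ≠ ⊤ ∧ wNormPow N γ u ≠ 0 ∧
    gradNormPow N u ≤ 1 ∧
    I = (wNormPow N γ u) ^ (-(((N : ℝ) - β) / ((N : ℝ) - γ))) * PhiInt N β α u }

/-- The weighted Li-Ruf supremum `B̃(N, β, γ)` at the critical exponent `α_{N,β}`. -/
noncomputable def LR (N : ℕ) (β γ : ℝ) : ℝ≥0∞ :=
  sSup { I : ℝ≥0∞ | ∃ u : EuclideanSpace ℝ (Fin N) → ℝ,
    gradNormPow N u + wNormPow N γ u ≤ 1 ∧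
    I = PhiInt N β (alphaNB N β) u }

noncomputable def moser (N : ℕ) (β : ℝ) (n : ℕ) (x : EuclideanSpace ℝ (Fin N)) : ℝ :=
  let b : ℝ := n / ((N : ℝ) - β)
  let A : ℝ := (sphereArea N) ^ (-(1 : ℝ) / N) * b ^ (-(1 : ℝ) / N)
  if ‖x‖ < Real.exp (-b) then A * b
  else if ‖x‖ < 1 then A * Real.log (1 / ‖x‖)
  else 0


/-! On the ball `‖x‖ < e^{-b_n}` the Moser function is the constant `A_n b_n`, at which
`α |u_n|^{N/(N-1)} = α n / α_{N,β}`. Since `Φ_N ≥ 0` on `[0, ∞)`, the integral is at least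
`Φ_N(α n / α_{N,β})` times the `|x|^{-β}`-weighted volume of that ball, and integration in polar
coordinates evaluates the latter to `ω_{N-1} e^{-n} / (N - β)`. -/

open Measure Set Metric Module

lemma Phi_nonneg (N : ℕ) {t : ℝ} (ht : 0 ≤ t) : 0 ≤ Phi N t :=
  sub_nonneg.2 (Real.sum_le_exp_of_nonneg ht _)

section Polar

variable {E : Type*} [NormedAddCommGroup E] [NormedSpace ℝ E] [MeasurableSpace E] [BorelSpace E]
  [FiniteDimensional ℝ E] [Nontrivial E] (μ : Measure E) [μ.IsAddHaarMeasure]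

theorem lintegral_fun_norm_addHaar (f : ℝ → ℝ≥0∞) (hf : Measurable f) :
    ∫⁻ x, f ‖x‖ ∂μ = finrank ℝ E * μ (ball 0 1) *
      ∫⁻ y in Ioi (0 : ℝ), ENNReal.ofReal (y ^ (finrank ℝ E - 1)) * f y := by
  have hmeas : Measurable fun p : sphere (0 : E) 1 × Ioi (0 : ℝ) ↦ f p.2.1 :=
    hf.comp (measurable_subtype_coe.comp measurable_snd)
  have hradial : ∫⁻ y : Ioi (0 : ℝ), f y.1 ∂volumeIoiPow (finrank ℝ E - 1) =
      ∫⁻ y in Ioi (0 : ℝ), ENNReal.ofReal (y ^ (finrank ℝ E - 1)) * f y := by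
    rw [volumeIoiPow, lintegral_withDensity_eq_lintegral_mul _
      (f := fun y : Ioi (0 : ℝ) ↦ ENNReal.ofReal (y.1 ^ (finrank ℝ E - 1))) (by fun_prop)
      (g := fun y : Ioi (0 : ℝ) ↦ f y.1) (hf.comp measurable_subtype_coe)]
    exact lintegral_subtype_comap measurableSet_Ioi
      fun y ↦ ENNReal.ofReal (y ^ (finrank ℝ E - 1)) * f y
  calc ∫⁻ x, f ‖x‖ ∂μ = ∫⁻ x : ({(0 : E)}ᶜ : Set E), f ‖x.1‖ ∂μ.comap (↑) := by
        rw [lintegral_subtype_comap (measurableSet_singleton 0).compl fun x ↦ f ‖x‖,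
          restrict_compl_singleton]
    _ = ∫⁻ p, f p.2.1 ∂μ.toSphere.prod (volumeIoiPow (finrank ℝ E - 1)) := by
        rw [← μ.measurePreserving_homeomorphUnitSphereProd.lintegral_comp hmeas]
        simp
    _ = _ := by
        simp only [lintegral_prod _ hmeas.aemeasurable, hradial, lintegral_const,
          toSphere_apply_univ, mul_comm]

theorem lintegral_Ioo_rpow {p : ℝ} (hp : -1 < p) {r : ℝ} (hr : 0 ≤ r) :
    ∫⁻ y in Ioo 0 r, ENNReal.ofReal (y ^ p) = ENNReal.ofReal (r ^ (p + 1) / (p + 1)) := by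
  have hint : IntegrableOn (fun y : ℝ ↦ y ^ p) (Ioo 0 r) := by
    rw [← intervalIntegrable_iff_integrableOn_Ioo_of_le hr]
    exact intervalIntegral.intervalIntegrable_rpow' hp
  rw [← ofReal_integral_eq_lintegral_ofReal hint, ← integral_Ioc_eq_integral_Ioo,
    ← intervalIntegral.integral_of_le hr, integral_rpow (.inl hp),
    Real.zero_rpow (by linarith), sub_zero]
  filter_upwards [ae_restrict_mem measurableSet_Ioo] with y hy
  exact Real.rpow_nonneg hy.1.le p

theorem lintegral_ball_norm_rpow_neg {β : ℝ} (hβ : β < finrank ℝ E) {r : ℝ} (hr : 0 ≤ r) :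
    ∫⁻ x in ball (0 : E) r, ENNReal.ofReal (‖x‖ ^ (-β)) ∂μ =
      ENNReal.ofReal (finrank ℝ E * μ.real (ball 0 1) *
        (r ^ ((finrank ℝ E : ℝ) - β) / ((finrank ℝ E : ℝ) - β))) := by
  have hd : 1 ≤ finrank ℝ E := finrank_pos
  have hradial : (ball (0 : E) r).indicator (fun x ↦ ENNReal.ofReal (‖x‖ ^ (-β))) =
      fun x ↦ (Iio r).indicator (fun y ↦ ENNReal.ofReal (y ^ (-β))) ‖x‖ := by
    ext x
    simp [indicator]
  have hshell : ∫⁻ y in Ioi (0 : ℝ), ENNReal.ofReal (y ^ (finrank ℝ E - 1)) *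
        (Iio r).indicator (fun y ↦ ENNReal.ofReal (y ^ (-β))) y =
      ∫⁻ y in Ioo 0 r, ENNReal.ofReal (y ^ ((finrank ℝ E : ℝ) - 1 - β)) := by
    rw [← Iio_inter_Ioi, ← Measure.restrict_restrict measurableSet_Iio,
      ← lintegral_indicator measurableSet_Iio]
    refine setLIntegral_congr_fun measurableSet_Ioi fun y (hy : 0 < y) ↦ ?_
    by_cases hyr : y < r
    · have hpow : y ^ (finrank ℝ E - 1) = y ^ ((finrank ℝ E : ℝ) - 1) := by
        rw [← Real.rpow_natCast, Nat.cast_sub hd, Nat.cast_one]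
      simp only [indicator, mem_Iio, hyr, if_true]
      rw [← ENNReal.ofReal_mul (by positivity), hpow, ← Real.rpow_add hy, ← sub_eq_add_neg]
    · simp [indicator, hyr]
  have hexp : (finrank ℝ E : ℝ) - 1 - β + 1 = finrank ℝ E - β := by ring
  rw [← lintegral_indicator measurableSet_ball, hradial,
    lintegral_fun_norm_addHaar μ _ ((by fun_prop : Measurable _).indicator measurableSet_Iio),
    hshell, lintegral_Ioo_rpow (by linarith) hr, hexp, ENNReal.ofReal_mul (by positivity),
    ENNReal.ofReal_mul (by positivity), ofReal_natCast, ofReal_measureReal]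

end Polar

theorem euclideanSpace_nontrivial {N : ℕ} (hN : 1 ≤ N) :
    Nontrivial (EuclideanSpace ℝ (Fin N)) := by
  obtain ⟨k, rfl⟩ := Nat.exists_eq_add_of_le' hN
  infer_instance

theorem sphereArea_pos {N : ℕ} (hN : 1 ≤ N) : 0 < sphereArea N := by
  have := euclideanSpace_nontrivial hN
  exact mul_pos (Nat.cast_pos.2 hN)
    (ENNReal.toReal_pos (measure_ball_pos volume 0 one_pos).ne' measure_ball_lt_top.ne)

theorem alphaNB_eq (N : ℕ) (hN : 2 ≤ N) (β : ℝ) :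
    alphaNB N β = ((N : ℝ) - β) * sphereArea N ^ ((1 : ℝ) / ((N : ℝ) - 1)) := by
  have : (N : ℝ) ≠ 0 := by positivity
  rw [alphaNB, alphaN]
  field_simp

theorem alphaNB_pos {N : ℕ} (hN : 2 ≤ N) {β : ℝ} (hβ : β < N) : 0 < alphaNB N β := by
  rw [alphaNB_eq N hN]
  exact mul_pos (by linarith) (Real.rpow_pos_of_pos (sphereArea_pos (by omega)) _)

theorem abs_moser_rpow_of_norm_lt {N : ℕ} (hN : 2 ≤ N) {β : ℝ} (hβ : β < N) {n : ℕ} (hn : 1 ≤ n)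
    {x : EuclideanSpace ℝ (Fin N)} (hx : ‖x‖ < Real.exp (-(n / ((N : ℝ) - β)))) :
    |moser N β n x| ^ ((N : ℝ) / ((N : ℝ) - 1)) = n / alphaNB N β := by
  have hN1 : (1 : ℝ) < N := by exact_mod_cast hN
  have hN1' : (N : ℝ) - 1 ≠ 0 := by linarith
  have hNβ : 0 < (N : ℝ) - β := by linarith
  have hS := sphereArea_pos (N := N) (by omega)
  set b : ℝ := n / ((N : ℝ) - β)
  have hb : 0 < b := div_pos (by exact_mod_cast hn) hNβ
  have hmoser : moser N β n x = sphereArea N ^ (-1 / N : ℝ) * b ^ (((N : ℝ) - 1) / N) := by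
    rw [moser, if_pos hx, mul_assoc, ← Real.rpow_add_one hb.ne']
    congr 2
    field_simp
    ring
  rw [hmoser, abs_of_pos (by positivity), Real.mul_rpow (by positivity) (by positivity),
    ← Real.rpow_mul hS.le, ← Real.rpow_mul hb.le, alphaNB_eq N hN]
  have hS_exp : -1 / N * ((N : ℝ) / ((N : ℝ) - 1)) = -(1 / ((N : ℝ) - 1)) := by
    field_simp
  have hb_exp : ((N : ℝ) - 1) / N * ((N : ℝ) / ((N : ℝ) - 1)) = 1 := by
    field_simp
  rw [hS_exp, hb_exp, Real.rpow_one, Real.rpow_neg hS.le]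
  field_simp
  exact div_mul_cancel₀ _ hNβ.ne'

theorem moser_phi_integral_lower_bound_general (N : ℕ) (hN : 2 ≤ N) (β : ℝ)
    (hβ : β < N)
    (α : ℝ) (hα : 0 < α) (n : ℕ) (hn : 1 ≤ n) :
    ENNReal.ofReal
        (sphereArea N / ((N : ℝ) - β) * Phi N (α / alphaNB N β * n) * Real.exp (-(n : ℝ))) ≤
      PhiInt N β α (moser N β n) := by
  have := euclideanSpace_nontrivial (N := N) (by omega)
  have hNβ : 0 < (N : ℝ) - β := by linarith
  have hαNB := alphaNB_pos hN hβ
  set r := Real.exp (-(n / ((N : ℝ) - β)))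
  have hr : r ^ ((N : ℝ) - β) = Real.exp (-n) := by
    rw [← Real.exp_mul]
    field_simp
  set c := Phi N (α / alphaNB N β * n)
  have hc : 0 ≤ c := Phi_nonneg N (by positivity)
  calc ENNReal.ofReal (sphereArea N / ((N : ℝ) - β) * c * Real.exp (-n))
      = ENNReal.ofReal c *
          ∫⁻ x in ball (0 : EuclideanSpace ℝ (Fin N)) r, ENNReal.ofReal (‖x‖ ^ (-β)) := by
        rw [lintegral_ball_norm_rpow_neg volume (by simpa using hβ) (Real.exp_pos _).le,
          finrank_euclideanSpace_fin, ← ENNReal.ofReal_mul hc, hr, sphereArea, ← measureReal_def]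
        ring_nf
    _ = ∫⁻ x in ball 0 r, ENNReal.ofReal
          (Phi N (α * |moser N β n x| ^ ((N : ℝ) / ((N : ℝ) - 1))) * ‖x‖ ^ (-β)) := by
        rw [← lintegral_const_mul' _ _ ENNReal.ofReal_ne_top]
        refine setLIntegral_congr_fun measurableSet_ball fun x hx ↦ ?_
        rw [abs_moser_rpow_of_norm_lt hN hβ hn (mem_ball_zero_iff.1 hx), ← mul_div_assoc,
          mul_div_right_comm, ENNReal.ofReal_mul hc]
    _ ≤ PhiInt N β α (moser N β n) := setLIntegral_le_lintegral _ _

theorem moser_phi_integral_lower_bound (N : ℕ) (hN : 2 ≤ N) (β γ : ℝ)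
    (hβ0 : 0 ≤ β) (hβ : β < N) (hγβ : γ ≤ β) (hγ : γ < N)
    (α : ℝ) (hα : 0 < α) (n : ℕ) (hn : 1 ≤ n) :
    ENNReal.ofReal
        (sphereArea N / ((N : ℝ) - β) * Phi N (α / alphaNB N β * n) * Real.exp (-(n : ℝ))) ≤
      PhiInt N β α (moser N β n) :=
  moser_phi_integral_lower_bound_general N hN β hβ α hα n hn
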